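/- Let D be a digraph with designated vertices s and t such that D has an out-branching rooted at s and an in-branching rooted at t, let (T̂, {B_x}) be the s-rooted cut decomposition of D, and let P̂ = x_1...x_ℓ be a degenerate path of T̂. Then every out-branching of D rooted at s contains all arcs of P̂. -/

import Mathlib

namespace CutPaper

variable {V : Type*}

/-- A directed path in the digraph `A`, given as a nonempty list of distinct
vertices from `u` to `v` with consecutive vertices joined by arcs. -/
def IsPath (A : V → V → Prop) (p : List V) (u v : V) : Prop :=
  p.Chain' A ∧ p.head? = some u ∧ p.getLast? = some v ∧ p.Nodup

/-- `v` is reachable from `u` in the digraph `A`. -/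
def Reaches (A : V → V → Prop) (u v : V) : Prop := ∃ p, IsPath A p u v

/-- Two paths from `r` to `v` are internally disjoint: they share only `r` and `v`. -/
def IntDisj (p q : List V) (r v : V) : Prop :=
  ∀ x, x ∈ p → x ∈ q → x = r ∨ x = v

/-- `v` is bi-reachable from `r`: there are two (distinct) internally
vertex-disjoint paths from `r` to `v`. -/
def BiReachable (A : V → V → Prop) (r v : V) : Prop :=
  ∃ p q, p ≠ q ∧ IsPath A p r v ∧ IsPath A q r v ∧ IntDisj p q r v

/-- The diblock of `r`: bi-reachable vertices together with `r` and its out-neighbours. -/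
def diblock (A : V → V → Prop) (r : V) : Set V :=
  {v | BiReachable A r v} ∪ {r} ∪ {v | A r v}

/-- The subdigraph of `A` induced on a vertex set `S`. -/
def Asub (A : V → V → Prop) (S : Set V) : V → V → Prop :=
  fun u v => A u v ∧ u ∈ S ∧ v ∈ S

/-- The path `p` meets the set `B` for the last time in `x`. -/
def LastTouch (B : Set V) (p : List V) (x : V) : Prop :=
  ∃ p₁ p₂, p = p₁ ++ x :: p₂ ∧ x ∈ B ∧ ∀ y ∈ p₂, y ∉ B

/-- `T` is an out-tree with vertex set `S` and root `r`, as a subdigraph of `A`. -/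
structure IsOutTree (A T : V → V → Prop) (S : Set V) (r : V) : Prop where
  sub : ∀ u v, T u v → A u v
  mem : ∀ u v, T u v → u ∈ S ∧ v ∈ S
  root_mem : r ∈ S
  no_in_root : ∀ u, ¬ T u r
  unique_in : ∀ v ∈ S, v ≠ r → ∃! u, T u v
  reach : ∀ v ∈ S, Reaches T r v

/-- `T` is an in-tree with vertex set `S` and root `r`, as a subdigraph of `A`. -/
def IsInTree (A T : V → V → Prop) (S : Set V) (r : V) : Prop :=
  IsOutTree (fun u v => A v u) (fun u v => T v u) S r

/-- The leaves (vertices of out-degree zero) of an out-tree `T` on vertex set `S`. -/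
def leaves (T : V → V → Prop) (S : Set V) : Set V :=
  {v | v ∈ S ∧ ∀ u, ¬ T v u}

/-- The leaves (vertices of in-degree zero) of an in-tree `T` on vertex set `S`. -/
def inLeaves (T : V → V → Prop) (S : Set V) : Set V :=
  {v | v ∈ S ∧ ∀ u, ¬ T u v}

/-- The raw data of a rooted cut decomposition: a node set, a parent map,
and an assignment of diblocks to nodes. -/
structure PreDecomp (V : Type*) where
  N : Set V
  parent : V → V
  B : V → Set V

/-- One step up the decomposition tree rooted at `r`. -/
def Step (d : PreDecomp V) (r : V) (a b : V) : Prop :=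
  a ∈ d.N ∧ a ≠ r ∧ d.parent a = b

/-- `x` is an ancestor (not necessarily proper) of `y` in the decomposition tree. -/
def Anc (d : PreDecomp V) (r : V) (x y : V) : Prop :=
  Relation.ReflTransGen (Step d r) y x

/-- `y` is a child of `x` in the decomposition tree. -/
def IsChild (d : PreDecomp V) (r : V) (y x : V) : Prop :=
  y ∈ d.N ∧ y ≠ r ∧ d.parent y = x

/-- `B*_x`: the union of the diblocks over the subtree rooted at `x`. -/
def Bstar (d : PreDecomp V) (r : V) (x : V) : Set V :=
  {v | ∃ y ∈ d.N, Anc d r x y ∧ v ∈ d.B y}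

/-- The partition class `X_y` of a bottleneck `y` of the diblock of `x`
inside `B*_x`: the vertices below `B x` whose access paths from `x`
leave `B x` for the last time at `y`. -/
def PartClass (A : V → V → Prop) (d : PreDecomp V) (r x y : V) : Set V :=
  {v | v ∈ Bstar d r x ∧ v ∉ d.B x ∧
    ∀ p, IsPath (Asub A (Bstar d r x)) p x v → LastTouch (d.B x) p y}

/-- `d` is the `r`-rooted cut decomposition of the digraph `A`:
the tree is well-founded towards the root `r`, the diblocks cover all vertices,
each `B x` is the diblock of `x` in the subdigraph induced on `B*_x`,
the children of `x` are exactly the bottlenecks of `B x`, and the subtree of a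
child `y` spans exactly `{y}` together with the partition class of `y`. -/
structure IsCutDecomp (A : V → V → Prop) (r : V) (d : PreDecomp V) : Prop where
  root_mem : r ∈ d.N
  parent_mem : ∀ x ∈ d.N, x ≠ r → d.parent x ∈ d.N
  tree : ∀ x ∈ d.N, Anc d r r x
  cover : Bstar d r r = Set.univ
  diblock_eq : ∀ x ∈ d.N, d.B x = diblock (Asub A (Bstar d r x)) x
  child_iff : ∀ x ∈ d.N, ∀ y,
    IsChild d r y x ↔ (y ∈ d.B x ∧ y ≠ x ∧ (PartClass A d r x y).Nonempty)
  child_part : ∀ x ∈ d.N, ∀ y, IsChild d r y x →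
    Bstar d r y = insert y (PartClass A d r x y)

/-!
Every path from `s` into `B*_x` ends with a path from `x` inside `B*_x`: this holds at the
root and passes from `x` to a child `y`, because a path from `x` that leaves `B_x` for the last
time at the bottleneck `y` stays inside the class `X_y` from then on.
Now let `B_a = {a, b}` and let `w` be the vertex before `b` on the path from `s` to `b` in an
out-branching. Then `w ∈ B*_a`; if `w ≠ a`, then `w ∉ B_a`, so `w ∈ B*_b`, and the path would
pass through `b` before reaching `w`. Hence `w = a`.
-/

theorem _root_.Set.eq_or_eq_of_ncard_eq_two {α : Type*} {S : Set α} {a b z : α} (hS : S.ncard = 2)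
    (ha : a ∈ S) (hb : b ∈ S) (hab : a ≠ b) (hz : z ∈ S) : z = a ∨ z = b := by
  have hpair : S = {a, b} := (Set.eq_of_subset_of_ncard_le
    (Set.insert_subset ha (Set.singleton_subset_iff.mpr hb))
    (by rw [hS, Set.ncard_pair hab]) (Set.finite_of_ncard_pos (by omega))).symm
  simpa [hpair] using hz

namespace IsPath

variable {A A' : V → V → Prop} {p l₁ l₂ : List V} {u v w : V}

theorem mono (hA : ∀ a b, A a b → A' a b) (hp : IsPath A p u v) : IsPath A' p u v :=
  ⟨hp.1.imp hA, hp.2⟩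

theorem head_mem (hp : IsPath A p u v) : u ∈ p :=
  List.mem_of_mem_head? hp.2.1

theorem left_of_append_cons (hp : IsPath A (l₁ ++ w :: l₂) u v) :
    IsPath A (l₁ ++ [w]) u w := by
  have hpre : l₁ ++ [w] <+: l₁ ++ w :: l₂ := ⟨l₂, by simp⟩
  refine ⟨hp.1.prefix hpre, ?_, List.getLast?_concat, hp.2.2.2.sublist hpre.sublist⟩
  rw [← List.head?_append_of_ne_nil (l₁ ++ [w]) (by simp) (l₂ := l₂)]
  simpa using hp.2.1

theorem right_of_append_cons (hp : IsPath A (l₁ ++ w :: l₂) u v) :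
    IsPath A (w :: l₂) w v := by
  have hsuf : w :: l₂ <:+ l₁ ++ w :: l₂ := ⟨l₁, rfl⟩
  refine ⟨hp.1.suffix hsuf, rfl, ?_, hp.2.2.2.sublist hsuf.sublist⟩
  simpa [List.getLast?_append] using hp.2.2.1

theorem exists_eq_append_pair (hp : IsPath A p u v) (huv : u ≠ v) :
    ∃ l w, p = l ++ [w, v] ∧ A w v := by
  obtain ⟨l', rfl⟩ := List.getLast?_eq_some_iff.mp hp.2.2.1
  rcases List.eq_nil_or_concat l' with rfl | ⟨l, w, rfl⟩
  · exact absurd (by simpa using hp.2.1.symm) huv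
  have hc : (l.concat w ++ [v]).IsChain A := hp.1
  exact ⟨l, w, by simp, (List.isChain_append.mp hc).2.2 w (by simp) v rfl⟩

theorem mem_of_asub {S : Set V} (hp : IsPath (Asub A S) p u v) (hu : u ∈ S) :
    ∀ z ∈ p, z ∈ S := by
  intro z hz
  obtain ⟨l₁, l₂, rfl⟩ := List.append_of_mem hz
  rcases List.eq_nil_or_concat l₁ with rfl | ⟨l, y, rfl⟩
  · exact Option.some.inj hp.2.1 ▸ hu
  have hc : (l.concat y ++ z :: l₂).IsChain (Asub A S) := hp.1
  exact (List.isChain_append.mp hc).2.2 y (by simp) z (by simp) |>.2.2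

theorem asub_of_forall_mem {S S' : Set V} (hp : IsPath (Asub A S) p u v)
    (hS' : ∀ z ∈ p, z ∈ S') : IsPath (Asub A S') p u v :=
  ⟨hp.1.imp_of_mem_imp fun a b ha hb hab => ⟨hab.1, hS' a ha, hS' b hb⟩, hp.2⟩

end IsPath

theorem LastTouch.unique {B : Set V} {p : List V} {y y' : V} (h : LastTouch B p y)
    (h' : LastTouch B p y') : y = y' := by
  obtain ⟨p₁, p₂, rfl, hy, hp₂⟩ := h
  obtain ⟨q₁, q₂, e, hy', hq₂⟩ := h'
  rcases List.append_eq_append_iff.mp e with ⟨r, -, hr⟩ | ⟨r, -, hr⟩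
  · cases r with
    | nil => simp_all
    | cons c r => exact absurd hy' (hp₂ y' (by simp_all))
  · cases r with
    | nil => simp_all
    | cons c r => exact absurd hy (hq₂ y (by simp_all))

def EntersThrough (A : V → V → Prop) (S : Set V) (s x : V) : Prop :=
  ∀ v ∈ S, ∀ p, IsPath A p s v → ∃ p₀ q, p = p₀ ++ q ∧ IsPath (Asub A S) q x v

section CutDecomp

variable {A : V → V → Prop} {s : V} {d : PreDecomp V} {x y w : V}

theorem exists_isChild_mem_Bstar (hw : w ∈ Bstar d s x) (hwB : w ∉ d.B x) :
    ∃ y, IsChild d s y x ∧ w ∈ Bstar d s y := by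
  obtain ⟨z, hz, hxz, hwz⟩ := hw
  rcases Relation.ReflTransGen.cases_tail hxz with rfl | ⟨y, hzy, hy⟩
  · exact absurd hwz hwB
  · exact ⟨y, hy, z, hz, hzy, hwz⟩

namespace IsCutDecomp

theorem mem_B_self (h : IsCutDecomp A s d) (hx : x ∈ d.N) : x ∈ d.B x := by
  rw [h.diblock_eq x hx]
  exact Or.inl (Or.inr rfl)

theorem mem_Bstar_self (h : IsCutDecomp A s d) (hx : x ∈ d.N) : x ∈ Bstar d s x :=
  ⟨x, hx, .refl, h.mem_B_self hx⟩

theorem exists_mem_partClass (h : IsCutDecomp A s d) (hx : x ∈ d.N) (hw : w ∈ Bstar d s x)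
    (hwB : w ∉ d.B x) :
    ∃ y, IsChild d s y x ∧ w ∈ PartClass A d s x y := by
  obtain ⟨y, hy, hwy⟩ := exists_isChild_mem_Bstar hw hwB
  rw [h.child_part x hx y hy] at hwy
  rcases hwy with rfl | hwy
  · exact absurd ((h.child_iff x hx w).mp hy).1 hwB
  · exact ⟨y, hy, hwy⟩

theorem induction_on (h : IsCutDecomp A s d) {P : V → Prop} (root : P s)
    (child : ∀ x ∈ d.N, ∀ y, IsChild d s y x → P x → P y) : ∀ x ∈ d.N, P x := by
  intro x hx
  induction h.tree x hx using Relation.ReflTransGen.head_induction_on with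
  | refl => exact root
  | head hstep _ ih =>
    obtain ⟨hyN, hys, rfl⟩ := hstep
    have hpN := h.parent_mem _ hyN hys
    exact child _ hpN _ ⟨hyN, hys, rfl⟩ (ih hpN)

theorem entersThrough_root (h : IsCutDecomp A s d) : EntersThrough A (Bstar d s s) s s := by
  intro v _ p hp
  refine ⟨[], p, rfl, hp.mono fun a b hab => ⟨hab, ?_, ?_⟩⟩ <;> simp [h.cover]

theorem mem_partClass_of_lastTouch (h : IsCutDecomp A s d) (hx : x ∈ d.N)
    {q₁ q₂ : List V} {v : V} (hq : IsPath (Asub A (Bstar d s x)) (q₁ ++ y :: q₂) x v)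
    (hq₂ : ∀ z ∈ q₂, z ∉ d.B x) (hyB : y ∈ d.B x) : ∀ z ∈ q₂, z ∈ PartClass A d s x y := by
  intro z hz
  have hzS := hq.mem_of_asub (h.mem_Bstar_self hx) z (by simp [hz])
  obtain ⟨y', -, hzy'⟩ := h.exists_mem_partClass hx hzS (hq₂ z hz)
  obtain ⟨r₁, r₂, rfl⟩ := List.append_of_mem hz
  have hqz : IsPath (Asub A (Bstar d s x)) ((q₁ ++ y :: r₁) ++ [z]) x z :=
    IsPath.left_of_append_cons (l₂ := r₂) (by simpa using hq)
  have htouch : LastTouch (d.B x) ((q₁ ++ y :: r₁) ++ [z]) y :=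
    ⟨q₁, r₁ ++ [z], by simp, hyB, fun w hw => hq₂ w (by simp at hw ⊢; tauto)⟩
  exact (htouch.unique (hzy'.2.2 _ hqz)) ▸ hzy'

theorem entersThrough_child (h : IsCutDecomp A s d) (hx : x ∈ d.N) (hy : IsChild d s y x)
    (hxS : EntersThrough A (Bstar d s x) s x) : EntersThrough A (Bstar d s y) s y := by
  intro v hv p hp
  rw [h.child_part x hx y hy] at hv ⊢
  rcases hv with rfl | hv
  · obtain ⟨p₀, rfl⟩ := List.getLast?_eq_some_iff.mp hp.2.2.1
    exact ⟨p₀, [v], rfl, List.isChain_singleton v, rfl, rfl, List.nodup_singleton v⟩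
  obtain ⟨p₀, q, rfl, hq⟩ := hxS v hv.1 p hp
  obtain ⟨q₁, q₂, rfl, hyB, hq₂⟩ := hv.2.2 q hq
  have hq₂y := h.mem_partClass_of_lastTouch hx hq hq₂ hyB
  refine ⟨p₀ ++ q₁, y :: q₂, by simp, hq.right_of_append_cons.asub_of_forall_mem ?_⟩
  simp only [List.mem_cons, forall_eq_or_imp]
  exact ⟨Set.mem_insert y _, fun z hz => Or.inr (hq₂y z hz)⟩

theorem entersThrough (h : IsCutDecomp A s d) (hx : x ∈ d.N) :
    EntersThrough A (Bstar d s x) s x :=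
  h.induction_on (P := fun x => EntersThrough A (Bstar d s x) s x) h.entersThrough_root
    (fun _ hx _ hy => h.entersThrough_child hx hy) x hx

theorem outTree_rel_of_ncard_B_eq_two (h : IsCutDecomp A s d) (hx : x ∈ d.N)
    (hy : IsChild d s y x) (hcard : (d.B x).ncard = 2) {T : V → V → Prop}
    (hT : IsOutTree A T Set.univ s) : T x y := by
  obtain ⟨hyB, hyx, -⟩ := (h.child_iff x hx y).mp hy
  have hB : ∀ z ∈ d.B x, z = x ∨ z = y :=
    fun z => Set.eq_or_eq_of_ncard_eq_two hcard (h.mem_B_self hx) hyB hyx.symm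
  obtain ⟨p, hp⟩ := hT.reach y trivial
  obtain ⟨l, w, rfl, hwy⟩ := hp.exists_eq_append_pair hy.2.1.symm
  have hpA : IsPath A (l ++ [w, y]) s y := hp.mono hT.sub
  have hnodup : List.Disjoint (l ++ [w]) [y] :=
    List.disjoint_of_nodup_append (by simpa using hp.2.2.2)
  suffices w = x from this ▸ hwy
  have hwS : w ∈ Bstar d s x := by
    obtain ⟨p₀, q, e, hq⟩ := h.entersThrough hx y
      ⟨y, hy.1, .single ⟨hy.1, hy.2.1, hy.2.2⟩, h.mem_B_self hy.1⟩ _ hpA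
    obtain ⟨q', w', rfl, hw'y⟩ := hq.exists_eq_append_pair hyx.symm
    obtain rfl : w = w' := by
      simpa using (List.append_inj' (e.trans (List.append_assoc _ _ _).symm) rfl).2
    exact hw'y.2.1
  by_contra hwx
  have hwy_ne : w ≠ y := fun e => hnodup (a := w) (by simp) (by simp [e])
  have hwB : w ∉ d.B x := fun hwB => (hB w hwB).elim hwx hwy_ne
  obtain ⟨y', hy', hwy'⟩ := exists_isChild_mem_Bstar hwS hwB
  obtain rfl : y' = y := by
    obtain ⟨hy'B, hy'x, -⟩ := (h.child_iff x hx y').mp hy'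
    exact (hB y' hy'B).resolve_left hy'x
  obtain ⟨p₀, q, e, hq⟩ := h.entersThrough hy'.1 w hwy' _ hpA.left_of_append_cons
  exact hnodup (e ▸ List.mem_append_right p₀ hq.head_mem) (List.mem_singleton_self y')

end IsCutDecomp

end CutDecomp

theorem degenerate_path_in_outBranchings_general {V : Type*}
    (A : V → V → Prop) (s : V)
    (d : PreDecomp V) (h : IsCutDecomp A s d)
    (P : List V) (hchain : List.Chain' (fun a b => IsChild d s b a) P)
    (hdeg : ∀ x ∈ P, x ∈ d.N ∧ (∃ y, IsChild d s y x) ∧ (d.B x).ncard = 2)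
    (T : V → V → Prop) (hT : IsOutTree A T Set.univ s) :
    List.Chain' T P :=
  List.IsChain.imp_of_mem_imp
    (fun x _ hx _ hxy => h.outTree_rel_of_ncard_B_eq_two (hdeg x hx).1 hxy (hdeg x hx).2.2 hT)
    hchain

/-- every out-branching rooted at `s` contains all arcs of a
degenerate path of the decomposition tree (a monotone path all of whose
diblocks are degenerate, i.e. belong to internal nodes and have exactly two
vertices). -/
theorem degenerate_path_in_outBranchings {V : Type*} [Fintype V]
    (A : V → V → Prop) (s t : V)
    (Tb Ti : V → V → Prop)
    (hout : IsOutTree A Tb Set.univ s) (hin : IsInTree A Ti Set.univ t)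
    (d : PreDecomp V) (h : IsCutDecomp A s d)
    (P : List V) (hchain : List.Chain' (fun a b => IsChild d s b a) P)
    (hdeg : ∀ x ∈ P, x ∈ d.N ∧ (∃ y, IsChild d s y x) ∧ (d.B x).ncard = 2)
    (T : V → V → Prop) (hT : IsOutTree A T Set.univ s) :
    List.Chain' T P :=
  degenerate_path_in_outBranchings_general A s d h P hchain hdeg T hT

end CutPaper
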